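/- Let q = (q₁, …, q₈) ∈ ℝ⁸ with all entries nonnegative. Then the following are equivalent: (i) q₁ + ⋯ + q₈ = 1, the function p₁ ↦ r(p₁, 9/11)·A·q is constant on [0,1], and the function p₂ ↦ r(9/11, p₂)·B·q is constant on [0,1]; (ii) q₆ = 15175619/10469888 − (23q₁ + 23q₂ + 12q₃ + 12q₄ + 11q₅)/11, q₇ = 15175619/10469888 − (23q₁ + 12q₂ + 23q₃ + 12q₄ + 11q₅)/11, and q₈ = −9940675/5234944 + (35q₁ + 24q₂ + 24q₃ + 13q₄ + 11q₅)/11. -/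

import Mathlib

open Matrix

/-- The product mixture `((1−p₁)(1−p₂), (1−p₁)p₂, p₁(1−p₂), p₁p₂)` in `ℝ⁴`. -/
noncomputable def prodMix (p₁ p₂ : ℝ) : Fin 4 → ℝ :=
  ![(1 - p₁) * (1 - p₂), (1 - p₁) * p₂, p₁ * (1 - p₂), p₁ * p₂]

/-- Player 1's payoff matrix against Banker at θ = 1/2. -/
noncomputable def matA : Matrix (Fin 4) (Fin 8) ℝ :=
  (-(16 / 13 ^ 9 : ℝ)) •
    !![5774122, 5774122, 4995370, 4995370, 4605994, 4605994, 3827242, 3827242;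
       6359098, 6359098, 5580346, 5580346, 5580346, 5580346, 4801594, 4801594;
       5127763, 5127763, 5300819, 5300819, 5387347, 5387347, 5560403, 5560403;
       5756515, 5756515, 5929571, 5929571, 5929571, 5929571, 6102627, 6102627]

/-- Player 2's payoff matrix against Banker at θ = 1/2. -/
noncomputable def matB : Matrix (Fin 4) (Fin 8) ℝ :=
  (-(16 / 13 ^ 9 : ℝ)) •
    !![5774122, 4995370, 5774122, 4995370, 4605994, 3827242, 4605994, 3827242;
       5127763, 5300819, 5127763, 5300819, 5387347, 5560403, 5387347, 5560403;
       6359098, 5580346, 6359098, 5580346, 5580346, 4801594, 5580346, 4801594;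
       5756515, 5929571, 5756515, 5929571, 5929571, 6102627, 5929571, 6102627]

/-!
Each player's payoff is affine in his own probability, so it is constant on `[0,1]` iff it takes
the same value at `0` and `1`. That gives one linear equation in `q` per player, and together
with `∑ q = 1` these three equations are solved for `q₆, q₇, q₈`.
-/

open Set

theorem prodMix_dotProduct_eq_affine_left (x p : ℝ) (v : Fin 4 → ℝ) :
    prodMix x p ⬝ᵥ v = (1 - x) * (prodMix 0 p ⬝ᵥ v) + x * (prodMix 1 p ⬝ᵥ v) := by
  simp only [prodMix, dotProduct, Fin.sum_univ_four, cons_val_zero, cons_val_one, cons_val]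
  ring

theorem prodMix_dotProduct_eq_affine_right (p x : ℝ) (v : Fin 4 → ℝ) :
    prodMix p x ⬝ᵥ v = (1 - x) * (prodMix p 0 ⬝ᵥ v) + x * (prodMix p 1 ⬝ᵥ v) := by
  simp only [prodMix, dotProduct, Fin.sum_univ_four, cons_val_zero, cons_val_one, cons_val]
  ring

theorem forall_Icc_eq_iff_of_affine {f : ℝ → ℝ} (hf : ∀ x, f x = (1 - x) * f 0 + x * f 1) :
    (∀ x ∈ Icc (0 : ℝ) 1, ∀ y ∈ Icc (0 : ℝ) 1, f x = f y) ↔ f 0 = f 1 := by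
  refine ⟨fun h ↦ h 0 (left_mem_Icc.2 zero_le_one) 1 (right_mem_Icc.2 zero_le_one), ?_⟩
  intro h x _ y _
  rw [hf x, hf y, h]
  ring

theorem prodMix_dotProduct_matA_sub (q : Fin 8 → ℝ) :
    prodMix 0 (9 / 11) ⬝ᵥ matA *ᵥ q - prodMix 1 (9 / 11) ⬝ᵥ matA *ᵥ q =
      -(16 / 13 ^ 9) / 11 * (6715965 * (q 0 + q 1) - 3753923 * (q 2 + q 3)
        - 4705731 * (q 4 + q 5) - 15175619 * (q 6 + q 7)) := by
  simp only [prodMix, matA, dotProduct, mulVec, Fin.sum_univ_four, Fin.sum_univ_eight,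
    Matrix.smul_apply, of_apply, cons_val, cons_val_zero, cons_val_one, smul_eq_mul]
  ring

theorem prodMix_dotProduct_matB_sub (q : Fin 8 → ℝ) :
    prodMix (9 / 11) 0 ⬝ᵥ matB *ᵥ q - prodMix (9 / 11) 1 ⬝ᵥ matB *ᵥ q =
      -(16 / 13 ^ 9) / 11 * (6715965 * (q 0 + q 2) - 3753923 * (q 1 + q 3)
        - 4705731 * (q 4 + q 6) - 15175619 * (q 5 + q 7)) := by
  simp only [prodMix, matB, dotProduct, mulVec, Fin.sum_univ_four, Fin.sum_univ_eight,
    Matrix.smul_apply, of_apply, cons_val, cons_val_zero, cons_val_one, smul_eq_mul]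
  ring

theorem player1_indifference_iff (q : Fin 8 → ℝ) :
    (∀ x ∈ Icc (0 : ℝ) 1, ∀ y ∈ Icc (0 : ℝ) 1,
        prodMix x (9 / 11) ⬝ᵥ matA *ᵥ q = prodMix y (9 / 11) ⬝ᵥ matA *ᵥ q) ↔
      6715965 * (q 0 + q 1) - 3753923 * (q 2 + q 3)
        - 4705731 * (q 4 + q 5) - 15175619 * (q 6 + q 7) = 0 := by
  rw [forall_Icc_eq_iff_of_affine (prodMix_dotProduct_eq_affine_left · _ _), ← sub_eq_zero,
    prodMix_dotProduct_matA_sub]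
  simp

theorem player2_indifference_iff (q : Fin 8 → ℝ) :
    (∀ x ∈ Icc (0 : ℝ) 1, ∀ y ∈ Icc (0 : ℝ) 1,
        prodMix (9 / 11) x ⬝ᵥ matB *ᵥ q = prodMix (9 / 11) y ⬝ᵥ matB *ᵥ q) ↔
      6715965 * (q 0 + q 2) - 3753923 * (q 1 + q 3)
        - 4705731 * (q 4 + q 6) - 15175619 * (q 5 + q 7) = 0 := by
  rw [forall_Icc_eq_iff_of_affine (prodMix_dotProduct_eq_affine_right _ · _), ← sub_eq_zero,
    prodMix_dotProduct_matB_sub]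
  simp

theorem indifference_iff_linear_equations_general (q : Fin 8 → ℝ) :
    ((∑ i, q i = 1) ∧
      (∀ x ∈ Set.Icc (0 : ℝ) 1, ∀ y ∈ Set.Icc (0 : ℝ) 1,
        prodMix x (9 / 11) ⬝ᵥ matA.mulVec q = prodMix y (9 / 11) ⬝ᵥ matA.mulVec q) ∧
      (∀ x ∈ Set.Icc (0 : ℝ) 1, ∀ y ∈ Set.Icc (0 : ℝ) 1,
        prodMix (9 / 11) x ⬝ᵥ matB.mulVec q = prodMix (9 / 11) y ⬝ᵥ matB.mulVec q)) ↔
    (q 5 = 15175619 / 10469888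
        - (23 * q 0 + 23 * q 1 + 12 * q 2 + 12 * q 3 + 11 * q 4) / 11 ∧
      q 6 = 15175619 / 10469888
        - (23 * q 0 + 12 * q 1 + 23 * q 2 + 12 * q 3 + 11 * q 4) / 11 ∧
      q 7 = -9940675 / 5234944
        + (35 * q 0 + 24 * q 1 + 24 * q 2 + 13 * q 3 + 11 * q 4) / 11) := by
  rw [player1_indifference_iff, player2_indifference_iff, Fin.sum_univ_eight]
  constructor
  · rintro ⟨hsum, hA, hB⟩
    refine ⟨?_, ?_, ?_⟩ <;> linarith
  · rintro ⟨h5, h6, h7⟩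
    refine ⟨?_, ?_, ?_⟩ <;> linarith

/-- A nonnegative `q ∈ ℝ⁸` sums to 1 and makes both Players indifferent
(`p₁ ↦ r(p₁, 9/11)·A·q` and `p₂ ↦ r(9/11, p₂)·B·q` constant on `[0,1]`) if and
only if it satisfies the three linear equations. -/
theorem indifference_iff_linear_equations (q : Fin 8 → ℝ) (hq : ∀ i, 0 ≤ q i) :
    ((∑ i, q i = 1) ∧
      (∀ x ∈ Set.Icc (0 : ℝ) 1, ∀ y ∈ Set.Icc (0 : ℝ) 1,
        prodMix x (9 / 11) ⬝ᵥ matA.mulVec q = prodMix y (9 / 11) ⬝ᵥ matA.mulVec q) ∧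
      (∀ x ∈ Set.Icc (0 : ℝ) 1, ∀ y ∈ Set.Icc (0 : ℝ) 1,
        prodMix (9 / 11) x ⬝ᵥ matB.mulVec q = prodMix (9 / 11) y ⬝ᵥ matB.mulVec q)) ↔
    (q 5 = 15175619 / 10469888
        - (23 * q 0 + 23 * q 1 + 12 * q 2 + 12 * q 3 + 11 * q 4) / 11 ∧
      q 6 = 15175619 / 10469888
        - (23 * q 0 + 12 * q 1 + 23 * q 2 + 12 * q 3 + 11 * q 4) / 11 ∧
      q 7 = -9940675 / 5234944
        + (35 * q 0 + 24 * q 1 + 24 * q 2 + 13 * q 3 + 11 * q 4) / 11) :=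
  indifference_iff_linear_equations_general q
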